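/- For the averaged Hamiltonian h₀(J, I) = ω₁ J + ω₂ I + I²/(2r²) + A·I·J + (3/8)·d·J², the Hessian with respect to (J, I) has determinant (3d)/(4r²) - A²; thus h₀ satisfies the Kolmogorov non-degeneracy condition (invertible Hessian) if and only if 3d/(4r²) ≠ 4A². -/

import Mathlib

/-! h₀ is a quadratic polynomial in (J, I), so its Hessian is the constant matrix
[[3d/4, A], [A, 1/r²]], whose determinant is 3d/(4r²) - A². -/

def quadratic2 (a b c p m n : ℝ) (x y : ℝ) : ℝ :=
  a + b * x + c * y + p * x ^ 2 + m * x * y + n * y ^ 2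

noncomputable def hessian2 (f : ℝ → ℝ → ℝ) (x y : ℝ) : Matrix (Fin 2) (Fin 2) ℝ :=
  !![deriv (fun s => deriv (fun t => f t y) s) x, deriv (fun s => deriv (fun t => f t s) x) y;
     deriv (fun s => deriv (fun t => f s t) y) x, deriv (fun s => deriv (fun t => f x t) s) y]

lemma deriv_quadratic (u v w t : ℝ) :
    deriv (fun s : ℝ => u + v * s + w * s ^ 2) t = v + 2 * w * t := by
  have h : HasDerivAt (fun s : ℝ => u + v * s + w * s ^ 2) (v * 1 + w * (2 * t ^ 1)) t :=
    (((hasDerivAt_id' t).const_mul v).const_add u).add ((hasDerivAt_pow 2 t).const_mul w)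
  rw [h.deriv]
  ring

section quadratic2

variable (a b c p m n : ℝ)

lemma deriv_quadratic2_fst (x y : ℝ) :
    deriv (fun s => quadratic2 a b c p m n s y) x = b + m * y + 2 * p * x := by
  have : (fun s => quadratic2 a b c p m n s y) =
      fun s => (a + c * y + n * y ^ 2) + (b + m * y) * s + p * s ^ 2 := by
    funext s; unfold quadratic2; ring
  rw [this, deriv_quadratic]

lemma deriv_quadratic2_snd (x y : ℝ) :
    deriv (fun t => quadratic2 a b c p m n x t) y = c + m * x + 2 * n * y := by
  have : (fun t => quadratic2 a b c p m n x t) =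
      fun t => (a + b * x + p * x ^ 2) + (c + m * x) * t + n * t ^ 2 := by
    funext t; unfold quadratic2; ring
  rw [this, deriv_quadratic]

lemma hessian2_quadratic2 (x y : ℝ) :
    hessian2 (quadratic2 a b c p m n) x y = !![2 * p, m; m, 2 * n] := by
  simp [hessian2, deriv_quadratic2_fst, deriv_quadratic2_snd]

lemma det_hessian2_quadratic2 (x y : ℝ) :
    (hessian2 (quadratic2 a b c p m n) x y).det = 4 * p * n - m ^ 2 := by
  rw [hessian2_quadratic2, Matrix.det_fin_two_of]
  ring

end quadratic2

theorem stmt_8_general (ω₁ ω₂ A d r : ℝ)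
    (h₀ : ℝ → ℝ → ℝ)
    (hdef : ∀ J I, h₀ J I = ω₁ * J + ω₂ * I + I ^ 2 / (2 * r ^ 2) + A * I * J
      + 3 / 8 * d * J ^ 2) (J I : ℝ) :
    Matrix.det
      !![deriv (fun x => deriv (fun y => h₀ y I) x) J,
         deriv (fun x => deriv (fun y => h₀ y x) J) I;
         deriv (fun x => deriv (fun y => h₀ x y) I) J,
         deriv (fun x => deriv (fun y => h₀ J y) x) I]
      = 3 * d / (4 * r ^ 2) - A ^ 2 ∧
    (Matrix.det
      !![deriv (fun x => deriv (fun y => h₀ y I) x) J,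
         deriv (fun x => deriv (fun y => h₀ y x) J) I;
         deriv (fun x => deriv (fun y => h₀ x y) I) J,
         deriv (fun x => deriv (fun y => h₀ J y) x) I] ≠ 0
      ↔ 3 * d / (4 * r ^ 2) ≠ A ^ 2) := by
  obtain rfl : h₀ = quadratic2 0 ω₁ ω₂ (3 / 8 * d) A (1 / (2 * r ^ 2)) := by
    funext x y; rw [hdef]; unfold quadratic2; ring
  have hdet : (hessian2 (quadratic2 0 ω₁ ω₂ (3 / 8 * d) A (1 / (2 * r ^ 2))) J I).det =
      3 * d / (4 * r ^ 2) - A ^ 2 := by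
    rw [det_hessian2_quadratic2]; ring
  exact ⟨hdet, hdet ▸ sub_ne_zero⟩

/-- For h₀(J,I) = ω₁J + ω₂I + I²/(2r²) + A·I·J + (3/8)d·J², the Hessian in (J,I)
has determinant 3d/(4r²) - A², so h₀ is Kolmogorov non-degenerate iff
3d/(4r²) ≠ A². -/
theorem stmt_8 (ω₁ ω₂ A d r : ℝ) (hr : 0 < r)
    (h₀ : ℝ → ℝ → ℝ)
    (hdef : ∀ J I, h₀ J I = ω₁ * J + ω₂ * I + I ^ 2 / (2 * r ^ 2) + A * I * J
      + 3 / 8 * d * J ^ 2) (J I : ℝ) :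
    Matrix.det
      !![deriv (fun x => deriv (fun y => h₀ y I) x) J,
         deriv (fun x => deriv (fun y => h₀ y x) J) I;
         deriv (fun x => deriv (fun y => h₀ x y) I) J,
         deriv (fun x => deriv (fun y => h₀ J y) x) I]
      = 3 * d / (4 * r ^ 2) - A ^ 2 ∧
    (Matrix.det
      !![deriv (fun x => deriv (fun y => h₀ y I) x) J,
         deriv (fun x => deriv (fun y => h₀ y x) J) I;
         deriv (fun x => deriv (fun y => h₀ x y) I) J,
         deriv (fun x => deriv (fun y => h₀ J y) x) I] ≠ 0
      ↔ 3 * d / (4 * r ^ 2) ≠ A ^ 2) :=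
  stmt_8_general ω₁ ω₂ A d r h₀ hdef J I
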